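/- Let f : S^ω ⇀ T^ω be a partial function and x ∈ dom(f). Suppose there exist finite words u_P ∈ S^*, u_R ∈ S^+ (nonempty), infinite continuations, and words z'_P, z'_R, z''_P ∈ T^* with a position i ≤ |z'_P| such that: x = u_P · u_R^ω, f(x) = z'_P · (z'_R)^ω with z'_R nonempty or f(x) having z'_P as prefix; for every n ∈ ℕ there exists y_n ∈ dom(f) of the form y_n = u_P · u_R^n · c_n for some c_n ∈ S^ω, with f(y_n) having z''_P as a prefix; and z'_P and z''_P mismatch at position i. Then f is not continuous at x. -/

import Mathlib

open scoped Classical in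
noncomputable def cantorDist {S : Type*} (u v : ℕ → S) : ℝ :=
  if u = v then 0 else (2 : ℝ)⁻¹ ^ sInf {i : ℕ | u i ≠ v i}

def ConvergesTo {S : Type*} (x : ℕ → ℕ → S) (l : ℕ → S) : Prop :=
  ∀ ε : ℝ, 0 < ε → ∃ N : ℕ, ∀ n ≥ N, cantorDist (x n) l ≤ ε

def IsPrefixOf {S : Type*} (l : List S) (w : ℕ → S) : Prop :=
  ∀ (i : ℕ) (h : i < l.length), l[i] = w i

lemma cantorDist_le_of_agree {S : Type*} (u v : ℕ → S) (k : ℕ)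
    (h : ∀ j < k, u j = v j) : cantorDist u v ≤ (2 : ℝ)⁻¹ ^ k := by
  unfold cantorDist
  split
  · positivity
  · next hne =>
    have hset : {i : ℕ | u i ≠ v i}.Nonempty := by
      by_contra hc
      exact hne (funext fun j => not_not.mp fun h => hc ⟨j, h⟩)
    have hmem := Nat.sInf_mem hset
    have hk : k ≤ sInf {i : ℕ | u i ≠ v i} := by
      by_contra hlt
      push_neg at hlt
      exact hmem (h _ hlt)
    exact pow_le_pow_of_le_one (by norm_num) (by norm_num) hk

lemma le_cantorDist_of_ne {S : Type*} (u v : ℕ → S) (k : ℕ)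
    (h : u k ≠ v k) : (2 : ℝ)⁻¹ ^ k ≤ cantorDist u v := by
  unfold cantorDist
  split
  · next he => exact absurd (congrFun he k) h
  · exact pow_le_pow_of_le_one (by norm_num) (by norm_num)
      (Nat.sInf_le h)

/-- Non-continuity witness: if `x = u_P · u_R^ω ∈ dom f`, `f x` starts with `z'_P`
(e.g. `f x = z'_P (z'_R)^ω`), and for every `n` there is `y n ∈ dom f` of the form
`u_P · u_R^n · c_n` whose image starts with `z''_P`, where `z'_P` and `z''_P`
mismatch at position `i`, then `f` is not (sequentially) continuous at `x`. -/
theorem not_continuousAt_of_pumping {S T : Type*} (f : (ℕ → S) → (ℕ → T))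
    (dom : Set (ℕ → S)) (x : ℕ → S) (hx : x ∈ dom)
    (uP uR : List S) (huR : uR ≠ [])
    (hxform : ∀ n : ℕ, IsPrefixOf (uP ++ (List.replicate n uR).flatten) x)
    (zP' zR' zP'' : List T)
    (hfx : (zR' ≠ [] ∧ ∀ n : ℕ, IsPrefixOf (zP' ++ (List.replicate n zR').flatten) (f x)) ∨
      IsPrefixOf zP' (f x))
    (y : ℕ → ℕ → S)
    (hy : ∀ n : ℕ, y n ∈ dom ∧ IsPrefixOf (uP ++ (List.replicate n uR).flatten) (y n) ∧
      IsPrefixOf zP'' (f (y n)))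
    (i : ℕ) (hi1 : i < zP'.length) (hi2 : i < zP''.length) (hmis : zP'[i] ≠ zP''[i]) :
    ¬ (∀ xs : ℕ → ℕ → S, (∀ n, xs n ∈ dom) → ConvergesTo xs x →
        ConvergesTo (fun n => f (xs n)) (f x)) := by
  intro hcont
  -- f x starts with zP'
  have hfxp : IsPrefixOf zP' (f x) := by
    rcases hfx with ⟨_, h⟩ | h
    · simpa using h 0
    · exact h
  -- length bound
  have hlen : ∀ n : ℕ, n ≤ (uP ++ (List.replicate n uR).flatten).length := by
    intro n
    have h1 : 1 ≤ uR.length := List.length_pos_iff.mpr huR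
    have : (List.replicate n uR).flatten.length = n * uR.length := by
      simp [List.length_flatten, List.map_replicate, List.sum_replicate, Nat.smul_one_eq_cast]
    calc n = n * 1 := (Nat.mul_one n).symm
      _ ≤ n * uR.length := Nat.mul_le_mul_left n h1
      _ ≤ uP.length + (List.replicate n uR).flatten.length := by omega
      _ = _ := (List.length_append).symm
  -- y converges to x
  have hconv : ConvergesTo y x := by
    intro ε hε
    obtain ⟨N, hN⟩ := exists_pow_lt_of_lt_one hε (by norm_num : (2 : ℝ)⁻¹ < 1)
    refine ⟨N, fun n hn => ?_⟩
    have hag : ∀ j < N, y n j = x j := by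
      intro j hj
      have hjl : j < (uP ++ (List.replicate n uR).flatten).length :=
        lt_of_lt_of_le (lt_of_lt_of_le hj hn) (hlen n)
      rw [← (hy n).2.1 j hjl, ← (hxform n) j hjl]
    calc cantorDist (y n) x ≤ (2 : ℝ)⁻¹ ^ N := cantorDist_le_of_agree _ _ N hag
      _ ≤ ε := le_of_lt hN
  have := hcont y (fun n => (hy n).1) hconv
  obtain ⟨N, hN⟩ := this ((2 : ℝ)⁻¹ ^ (i + 1)) (by positivity)
  have h1 := hN N le_rfl
  have hne : f (y N) i ≠ f x i := by
    rw [← (hy N).2.2 i hi2, ← hfxp i hi1]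
    exact fun h => hmis h.symm
  have h2 := le_cantorDist_of_ne (f (y N)) (f x) i hne
  have h3 : (2 : ℝ)⁻¹ ^ (i + 1) < (2 : ℝ)⁻¹ ^ i := by
    apply pow_lt_pow_right_of_lt_one₀ <;> norm_num
  simp only at h1
  linarith
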